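/- arXiv:2008.10547 — 6 statements merged into one kernel-verified Lean document; each statement's English description precedes it below -/
import Mathlib

section
/- Suppose additionally that V Vᵀ x_n = x_n for all n (the covariates lie in the R-dimensional column space of V). Then for every n = 1, …, N, the predictions of the full and restricted problems coincide: x_nᵀ θ_{∖n} = x̃_nᵀ φ_{∖n}, x_nᵀ θ̂_{IJ,∖n} = x̃_nᵀ φ̂_{IJ,∖n}, and x_nᵀ θ̂_{NS,∖n} = x̃_nᵀ φ̂_{NS,∖n}. -/
/-!
If every covariate lies in the column space of `V`, then `θ ↦ Vᵀθ` and `φ ↦ Vφ` relate the full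
and restricted problems: `F (V φ) = F_R φ`, since `V` is an isometry, while `F_R (Vᵀ θ) ≤ F θ`,
since `x̃ₙᵀ Vᵀθ = xₙᵀθ` and `Vᵀ` is a contraction. Hence `V φ̂` minimizes `F`, so `θ̂ = V φ̂`, and
likewise for the leave-one-out problems. In particular the derivatives `D⁽ᵏ⁾ₙ` and `D̃⁽ᵏ⁾ₙ` agree,
so `H V = V H_R`; as both Hessians are invertible (convexity and `λ > 0`), also `H⁻¹ V = V H_R⁻¹`,
which gives `xₙᵀ H⁻¹ xₙ = x̃ₙᵀ H_R⁻¹ x̃ₙ`, and the same for the leave-one-out Hessians.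
-/

open Matrix

theorem ConvexOn.iteratedDeriv_two_nonneg {g : ℝ → ℝ} (hconv : ConvexOn ℝ Set.univ g)
    (hdiff : Differentiable ℝ g) (t : ℝ) : 0 ≤ iteratedDeriv 2 g t := by
  rw [iteratedDeriv_succ, iteratedDeriv_one]
  exact (monotoneOn_univ.mp (hconv.monotoneOn_deriv fun z _ => hdiff z)).deriv_nonneg

theorem apply_map_le_of_minimizes {α β γ : Type*} [Preorder γ] {F : α → γ} {G : β → γ}
    {e : β → α} {p : α → β} (he : ∀ b, F (e b) = G b) (hp : ∀ a, G (p a) ≤ F a) {b : β}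
    (hb : ∀ b', G b ≤ G b') (a : α) : F (e b) ≤ F a :=
  calc F (e b) = G b := he b
    _ ≤ G (p a) := hb _
    _ ≤ F a := hp a

section Restriction

variable {ι n r : Type*} [Fintype n] [Fintype r]

theorem dotProduct_mulVec_eq_transpose_mulVec (u : n → ℝ) (V : Matrix n r ℝ) (φ : r → ℝ) :
    u ⬝ᵥ (V *ᵥ φ) = (Vᵀ *ᵥ u) ⬝ᵥ φ := by
  rw [dotProduct_mulVec, mulVec_transpose]

variable [DecidableEq r] {V : Matrix n r ℝ}

theorem mulVec_dotProduct_mulVec_self (hV : Vᵀ * V = 1) (φ : r → ℝ) :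
    (V *ᵥ φ) ⬝ᵥ (V *ᵥ φ) = φ ⬝ᵥ φ := by
  rw [dotProduct_mulVec_eq_transpose_mulVec, mulVec_mulVec, hV, Matrix.one_mulVec]

theorem transpose_mulVec_dotProduct_self_le (hV : Vᵀ * V = 1) (θ : n → ℝ) :
    (Vᵀ *ᵥ θ) ⬝ᵥ (Vᵀ *ᵥ θ) ≤ θ ⬝ᵥ θ := by
  set p := V *ᵥ (Vᵀ *ᵥ θ)
  have hθp : θ ⬝ᵥ p = (Vᵀ *ᵥ θ) ⬝ᵥ (Vᵀ *ᵥ θ) := dotProduct_mulVec_eq_transpose_mulVec _ _ _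
  have hpp : p ⬝ᵥ p = (Vᵀ *ᵥ θ) ⬝ᵥ (Vᵀ *ᵥ θ) := mulVec_dotProduct_mulVec_self hV _
  have hsq : 0 ≤ (θ - p) ⬝ᵥ (θ - p) := Finset.sum_nonneg fun i _ => mul_self_nonneg _
  rw [sub_dotProduct, dotProduct_sub, dotProduct_sub, dotProduct_comm p θ, hθp, hpp] at hsq
  linarith

/-- The regularized empirical risk `c ∑_{m ∈ s} f (xₘᵀθ, yₘ) + (λ/2)‖θ‖²`; the full objective has
`s = univ`, the leave-one-out objectives `s = univ.erase n`. -/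
noncomputable def ridgeObjective (f : ℝ → ℝ → ℝ) (x : ι → n → ℝ) (y : ι → ℝ) (c lam : ℝ)
    (s : Finset ι) (θ : n → ℝ) : ℝ :=
  c * ∑ m ∈ s, f (x m ⬝ᵥ θ) (y m) + lam / 2 * (θ ⬝ᵥ θ)

def ridgeHessian [DecidableEq n] (d : ι → ℝ) (x : ι → n → ℝ) (c lam : ℝ) (s : Finset ι) :
    Matrix n n ℝ :=
  c • ∑ m ∈ s, d m • vecMulVec (x m) (x m) + lam • 1

theorem ridgeObjective_mulVec (hV : Vᵀ * V = 1) (f : ℝ → ℝ → ℝ) (x : ι → n → ℝ) (y : ι → ℝ)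
    (c lam : ℝ) (s : Finset ι) (φ : r → ℝ) :
    ridgeObjective f x y c lam s (V *ᵥ φ) = ridgeObjective f (fun m => Vᵀ *ᵥ x m) y c lam s φ := by
  simp only [ridgeObjective, dotProduct_mulVec_eq_transpose_mulVec,
    mulVec_dotProduct_mulVec_self hV]

theorem ridgeObjective_transpose_mulVec_le (hV : Vᵀ * V = 1) {x : ι → n → ℝ}
    (hx : ∀ m, V *ᵥ (Vᵀ *ᵥ x m) = x m) (f : ℝ → ℝ → ℝ) (y : ι → ℝ) (c : ℝ) {lam : ℝ}
    (hlam : 0 ≤ lam) (s : Finset ι) (θ : n → ℝ) :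
    ridgeObjective f (fun m => Vᵀ *ᵥ x m) y c lam s (Vᵀ *ᵥ θ) ≤ ridgeObjective f x y c lam s θ := by
  have hpred : ∀ m, (Vᵀ *ᵥ x m) ⬝ᵥ (Vᵀ *ᵥ θ) = x m ⬝ᵥ θ := fun m => by
    rw [dotProduct_comm, ← dotProduct_mulVec_eq_transpose_mulVec, hx, dotProduct_comm]
  simp only [ridgeObjective, hpred]
  gcongr
  exact transpose_mulVec_dotProduct_self_le hV θ

theorem mulVec_eq_of_minimizes_ridgeObjective (hV : Vᵀ * V = 1) {x : ι → n → ℝ}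
    (hx : ∀ m, V *ᵥ (Vᵀ *ᵥ x m) = x m) {f : ℝ → ℝ → ℝ} {y : ι → ℝ} {c lam : ℝ} (hlam : 0 ≤ lam)
    {s : Finset ι} {F : (n → ℝ) → ℝ} (hF : F = ridgeObjective f x y c lam s) {θ : n → ℝ}
    (hθ : ∀ θ', (∀ θ'', F θ' ≤ F θ'') → θ' = θ) {G : (r → ℝ) → ℝ}
    (hG : G = ridgeObjective f (fun m => Vᵀ *ᵥ x m) y c lam s) {φ : r → ℝ}
    (hφ : ∀ φ', G φ ≤ G φ') : V *ᵥ φ = θ := by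
  subst hF hG
  exact hθ _ (apply_map_le_of_minimizes (ridgeObjective_mulVec hV f x y c lam s)
    (ridgeObjective_transpose_mulVec_le hV hx f y c hlam s) hφ)

variable [DecidableEq n]

theorem ridgeHessian_mul {x : ι → n → ℝ} (hx : ∀ m, V *ᵥ (Vᵀ *ᵥ x m) = x m) (d : ι → ℝ)
    (c lam : ℝ) (s : Finset ι) :
    ridgeHessian d x c lam s * V = V * ridgeHessian d (fun m => Vᵀ *ᵥ x m) c lam s := by
  simp only [ridgeHessian, Matrix.add_mul, Matrix.mul_add, Matrix.smul_mul, Matrix.mul_smul,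
    Matrix.one_mul, Matrix.mul_one, Matrix.sum_mul, Matrix.mul_sum, vecMulVec_mul, mul_vecMulVec,
    hx, ← mulVec_transpose]

theorem ridgeHessian_posDef {d : ι → ℝ} {s : Finset ι} (hd : ∀ m ∈ s, 0 ≤ d m)
    (x : ι → n → ℝ) {c lam : ℝ} (hc : 0 ≤ c) (hlam : 0 < lam) :
    (ridgeHessian d x c lam s).PosDef := by
  refine PosDef.posSemidef_add (PosSemidef.smul ?_ hc) (PosDef.one.smul hlam)
  refine posSemidef_sum s fun m hm => PosSemidef.smul ?_ (hd m hm)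
  simpa using posSemidef_vecMulVec_self_star (x m)

theorem inv_mul_eq_mul_inv_of_mul_eq {A : Matrix n n ℝ} {B : Matrix r r ℝ} (hA : IsUnit A.det)
    (hB : IsUnit B.det) (hAB : A * V = V * B) : A⁻¹ * V = V * B⁻¹ :=
  calc A⁻¹ * V = A⁻¹ * (A * V) * B⁻¹ := by
        rw [hAB, ← Matrix.mul_assoc, Matrix.mul_assoc _ B, mul_nonsing_inv _ hB, Matrix.mul_one]
    _ = V * B⁻¹ := by rw [← Matrix.mul_assoc A⁻¹, nonsing_inv_mul _ hA, Matrix.one_mul]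

theorem dotProduct_add_smul_inv_mulVec {A : Matrix n n ℝ} {B : Matrix r r ℝ} (hA : A.PosDef)
    (hB : B.PosDef) (hAB : A * V = V * B) {u : n → ℝ} (hu : V *ᵥ (Vᵀ *ᵥ u) = u) (φ : r → ℝ)
    (a : ℝ) :
    u ⬝ᵥ (V *ᵥ φ + a • (A⁻¹ *ᵥ u)) = (Vᵀ *ᵥ u) ⬝ᵥ (φ + a • (B⁻¹ *ᵥ (Vᵀ *ᵥ u))) := by
  have hinv := inv_mul_eq_mul_inv_of_mul_eq ((isUnit_iff_isUnit_det A).mp hA.isUnit)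
    ((isUnit_iff_isUnit_det B).mp hB.isUnit) hAB
  have hstep : A⁻¹ *ᵥ u = V *ᵥ (B⁻¹ *ᵥ (Vᵀ *ᵥ u)) := by
    conv_lhs => rw [← hu]
    rw [mulVec_mulVec, hinv, ← mulVec_mulVec]
  rw [hstep, ← mulVec_smul, ← mulVec_add, dotProduct_mulVec_eq_transpose_mulVec]

end Restriction

theorem stmt_0_general
    (N D : ℕ)
    (x : Fin N → Fin D → ℝ) (y : Fin N → ℝ)
    (lam : ℝ) (hlam : 0 < lam)
    (f : ℝ → ℝ → ℝ)
    (hconv : ∀ c : ℝ, ConvexOn ℝ Set.univ (fun z => f z c))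
    (hsmooth : ∀ c : ℝ, ContDiff ℝ 2 (fun z => f z c))
    (F : (Fin D → ℝ) → ℝ)
    (hF : F = fun θ => (1 / N : ℝ) * ∑ n, f (x n ⬝ᵥ θ) (y n) + lam / 2 * (θ ⬝ᵥ θ))
    (Floo : Fin N → (Fin D → ℝ) → ℝ)
    (hFloo : ∀ n, Floo n = fun θ =>
      (1 / N : ℝ) * ∑ m ∈ Finset.univ.erase n, f (x m ⬝ᵥ θ) (y m) + lam / 2 * (θ ⬝ᵥ θ))
    (θhat : Fin D → ℝ)
    (hθhatU : ∀ θ, (∀ θ', F θ ≤ F θ') → θ = θhat)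
    (θloo : Fin N → Fin D → ℝ)
    (hθlooU : ∀ n θ, (∀ θ', Floo n θ ≤ Floo n θ') → θ = θloo n)
    (D1 : Fin N → ℝ)
    (hD1 : ∀ n, D1 n = deriv (fun z => f z (y n)) (x n ⬝ᵥ θhat))
    (D2 : Fin N → ℝ)
    (hD2 : ∀ n, D2 n = iteratedDeriv 2 (fun z => f z (y n)) (x n ⬝ᵥ θhat))
    (H : Matrix (Fin D) (Fin D) ℝ)
    (hH : H = (1 / N : ℝ) • ∑ m, D2 m • Matrix.vecMulVec (x m) (x m) + lam • 1)
    (Hloo : Fin N → Matrix (Fin D) (Fin D) ℝ)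
    (hHloo : ∀ n, Hloo n =
      (1 / N : ℝ) • ∑ m ∈ Finset.univ.erase n, D2 m • Matrix.vecMulVec (x m) (x m) + lam • 1)
    (θIJ : Fin N → Fin D → ℝ)
    (hθIJ : ∀ n, θIJ n = θhat + (D1 n / N) • (H⁻¹ *ᵥ x n))
    (θNS : Fin N → Fin D → ℝ)
    (hθNS : ∀ n, θNS n = θhat + (D1 n / N) • ((Hloo n)⁻¹ *ᵥ x n))
    (R : ℕ)
    (V : Matrix (Fin D) (Fin R) ℝ) (hV : Vᵀ * V = 1)
    (xt : Fin N → Fin R → ℝ) (hxt : ∀ n, xt n = Vᵀ *ᵥ x n)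
    (hproj : ∀ n, V *ᵥ (Vᵀ *ᵥ x n) = x n)
    (FR : (Fin R → ℝ) → ℝ)
    (hFR : FR = fun φ => (1 / N : ℝ) * ∑ n, f (xt n ⬝ᵥ φ) (y n) + lam / 2 * (φ ⬝ᵥ φ))
    (FRloo : Fin N → (Fin R → ℝ) → ℝ)
    (hFRloo : ∀ n, FRloo n = fun φ =>
      (1 / N : ℝ) * ∑ m ∈ Finset.univ.erase n, f (xt m ⬝ᵥ φ) (y m) + lam / 2 * (φ ⬝ᵥ φ))
    (φhat : Fin R → ℝ)
    (hφhat : ∀ φ, FR φhat ≤ FR φ)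
    (φloo : Fin N → Fin R → ℝ)
    (hφloo : ∀ n φ, FRloo n (φloo n) ≤ FRloo n φ)
    (Dt1 : Fin N → ℝ)
    (hDt1 : ∀ n, Dt1 n = deriv (fun z => f z (y n)) (xt n ⬝ᵥ φhat))
    (Dt2 : Fin N → ℝ)
    (hDt2 : ∀ n, Dt2 n = iteratedDeriv 2 (fun z => f z (y n)) (xt n ⬝ᵥ φhat))
    (HR : Matrix (Fin R) (Fin R) ℝ)
    (hHR : HR = (1 / N : ℝ) • ∑ m, Dt2 m • Matrix.vecMulVec (xt m) (xt m) + lam • 1)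
    (HRloo : Fin N → Matrix (Fin R) (Fin R) ℝ)
    (hHRloo : ∀ n, HRloo n =
      (1 / N : ℝ) • ∑ m ∈ Finset.univ.erase n, Dt2 m • Matrix.vecMulVec (xt m) (xt m) + lam • 1)
    (φIJ : Fin N → Fin R → ℝ)
    (hφIJ : ∀ n, φIJ n = φhat + (Dt1 n / N) • (HR⁻¹ *ᵥ xt n))
    (φNS : Fin N → Fin R → ℝ)
    (hφNS : ∀ n, φNS n = φhat + (Dt1 n / N) • ((HRloo n)⁻¹ *ᵥ xt n))
    :
    ∀ n : Fin N,
      x n ⬝ᵥ θloo n = xt n ⬝ᵥ φloo n ∧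
      x n ⬝ᵥ θIJ n = xt n ⬝ᵥ φIJ n ∧
      x n ⬝ᵥ θNS n = xt n ⬝ᵥ φNS n := by
  intro n
  obtain rfl : xt = fun m => Vᵀ *ᵥ x m := funext hxt
  have hhat : θhat = V *ᵥ φhat :=
    (mulVec_eq_of_minimizes_ridgeObjective hV hproj hlam.le hF hθhatU hFR hφhat).symm
  have hloo : θloo n = V *ᵥ φloo n :=
    (mulVec_eq_of_minimizes_ridgeObjective hV hproj hlam.le (hFloo n) (hθlooU n) (hFRloo n)
      (hφloo n)).symm
  have hpred : ∀ m, x m ⬝ᵥ θhat = (Vᵀ *ᵥ x m) ⬝ᵥ φhat := fun m => by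
    rw [hhat, dotProduct_mulVec_eq_transpose_mulVec]
  have hD1n : D1 n = Dt1 n := by rw [hD1, hDt1, hpred]
  obtain rfl : D2 = Dt2 := funext fun m => by rw [hD2, hDt2, hpred]
  have hD2_nonneg : ∀ m, 0 ≤ D2 m := fun m => hD2 m ▸
    (hconv (y m)).iteratedDeriv_two_nonneg ((hsmooth (y m)).differentiable (by norm_num)) _
  have hposDef : ∀ {k : ℕ} (z : Fin N → Fin k → ℝ) (s : Finset (Fin N)),
      (ridgeHessian D2 z (1 / N : ℝ) lam s).PosDef := fun z _ =>
    ridgeHessian_posDef (fun m _ => hD2_nonneg m) z (by positivity) hlam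
  refine ⟨by rw [hloo, dotProduct_mulVec_eq_transpose_mulVec], ?_, ?_⟩
  · rw [hθIJ, hφIJ, hhat, hD1n, hH, hHR]
    exact dotProduct_add_smul_inv_mulVec (hposDef _ _) (hposDef _ _)
      (ridgeHessian_mul hproj _ _ _ _) (hproj n) φhat _
  · rw [hθNS, hφNS, hhat, hD1n, hHloo, hHRloo]
    exact dotProduct_add_smul_inv_mulVec (hposDef _ _) (hposDef _ _)
      (ridgeHessian_mul hproj _ _ _ _) (hproj n) φhat _

theorem stmt_0
    (N D : ℕ) (hN : 1 ≤ N) (hD : 1 ≤ D)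
    (x : Fin N → Fin D → ℝ) (y : Fin N → ℝ)
    (lam : ℝ) (hlam : 0 < lam)
    (f : ℝ → ℝ → ℝ)
    (hconv : ∀ c : ℝ, ConvexOn ℝ Set.univ (fun z => f z c))
    (hsmooth : ∀ c : ℝ, ContDiff ℝ 2 (fun z => f z c))
    (F : (Fin D → ℝ) → ℝ)
    (hF : F = fun θ => (1 / N : ℝ) * ∑ n, f (x n ⬝ᵥ θ) (y n) + lam / 2 * (θ ⬝ᵥ θ))
    (Floo : Fin N → (Fin D → ℝ) → ℝ)
    (hFloo : ∀ n, Floo n = fun θ =>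
      (1 / N : ℝ) * ∑ m ∈ Finset.univ.erase n, f (x m ⬝ᵥ θ) (y m) + lam / 2 * (θ ⬝ᵥ θ))
    (θhat : Fin D → ℝ)
    (hθhat : ∀ θ, F θhat ≤ F θ)
    (hθhatU : ∀ θ, (∀ θ', F θ ≤ F θ') → θ = θhat)
    (θloo : Fin N → Fin D → ℝ)
    (hθloo : ∀ n θ, Floo n (θloo n) ≤ Floo n θ)
    (hθlooU : ∀ n θ, (∀ θ', Floo n θ ≤ Floo n θ') → θ = θloo n)
    (D1 : Fin N → ℝ)
    (hD1 : ∀ n, D1 n = deriv (fun z => f z (y n)) (x n ⬝ᵥ θhat))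
    (D2 : Fin N → ℝ)
    (hD2 : ∀ n, D2 n = iteratedDeriv 2 (fun z => f z (y n)) (x n ⬝ᵥ θhat))
    (H : Matrix (Fin D) (Fin D) ℝ)
    (hH : H = (1 / N : ℝ) • ∑ m, D2 m • Matrix.vecMulVec (x m) (x m) + lam • 1)
    (Hloo : Fin N → Matrix (Fin D) (Fin D) ℝ)
    (hHloo : ∀ n, Hloo n =
      (1 / N : ℝ) • ∑ m ∈ Finset.univ.erase n, D2 m • Matrix.vecMulVec (x m) (x m) + lam • 1)
    (θIJ : Fin N → Fin D → ℝ)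
    (hθIJ : ∀ n, θIJ n = θhat + (D1 n / N) • (H⁻¹ *ᵥ x n))
    (θNS : Fin N → Fin D → ℝ)
    (hθNS : ∀ n, θNS n = θhat + (D1 n / N) • ((Hloo n)⁻¹ *ᵥ x n))
    (R : ℕ)
    (V : Matrix (Fin D) (Fin R) ℝ) (hV : Vᵀ * V = 1)
    (xt : Fin N → Fin R → ℝ) (hxt : ∀ n, xt n = Vᵀ *ᵥ x n)
    (hproj : ∀ n, V *ᵥ (Vᵀ *ᵥ x n) = x n)
    (FR : (Fin R → ℝ) → ℝ)
    (hFR : FR = fun φ => (1 / N : ℝ) * ∑ n, f (xt n ⬝ᵥ φ) (y n) + lam / 2 * (φ ⬝ᵥ φ))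
    (FRloo : Fin N → (Fin R → ℝ) → ℝ)
    (hFRloo : ∀ n, FRloo n = fun φ =>
      (1 / N : ℝ) * ∑ m ∈ Finset.univ.erase n, f (xt m ⬝ᵥ φ) (y m) + lam / 2 * (φ ⬝ᵥ φ))
    (φhat : Fin R → ℝ)
    (hφhat : ∀ φ, FR φhat ≤ FR φ)
    (hφhatU : ∀ φ, (∀ φ', FR φ ≤ FR φ') → φ = φhat)
    (φloo : Fin N → Fin R → ℝ)
    (hφloo : ∀ n φ, FRloo n (φloo n) ≤ FRloo n φ)
    (hφlooU : ∀ n φ, (∀ φ', FRloo n φ ≤ FRloo n φ') → φ = φloo n)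
    (Dt1 : Fin N → ℝ)
    (hDt1 : ∀ n, Dt1 n = deriv (fun z => f z (y n)) (xt n ⬝ᵥ φhat))
    (Dt2 : Fin N → ℝ)
    (hDt2 : ∀ n, Dt2 n = iteratedDeriv 2 (fun z => f z (y n)) (xt n ⬝ᵥ φhat))
    (HR : Matrix (Fin R) (Fin R) ℝ)
    (hHR : HR = (1 / N : ℝ) • ∑ m, Dt2 m • Matrix.vecMulVec (xt m) (xt m) + lam • 1)
    (HRloo : Fin N → Matrix (Fin R) (Fin R) ℝ)
    (hHRloo : ∀ n, HRloo n =
      (1 / N : ℝ) • ∑ m ∈ Finset.univ.erase n, Dt2 m • Matrix.vecMulVec (xt m) (xt m) + lam • 1)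
    (φIJ : Fin N → Fin R → ℝ)
    (hφIJ : ∀ n, φIJ n = φhat + (Dt1 n / N) • (HR⁻¹ *ᵥ xt n))
    (φNS : Fin N → Fin R → ℝ)
    (hφNS : ∀ n, φNS n = φhat + (Dt1 n / N) • ((HRloo n)⁻¹ *ᵥ xt n))
    :
    ∀ n : Fin N,
      x n ⬝ᵥ θloo n = xt n ⬝ᵥ φloo n ∧
      x n ⬝ᵥ θIJ n = xt n ⬝ᵥ φIJ n ∧
      x n ⬝ᵥ θNS n = xt n ⬝ᵥ φNS n :=
  stmt_0_general N D x y lam hlam f hconv hsmooth F hF Floo hFloo θhat hθhatU θloo hθlooU D1 hD1 D2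
    hD2 H hH Hloo hHloo θIJ hθIJ θNS hθNS R V hV xt hxt hproj FR hFR FRloo hFRloo φhat hφhat φloo
    hφloo Dt1 hDt1 Dt2 hDt2 HR hHR HRloo hHRloo φIJ hφIJ φNS hφNS
end

section
/- Suppose additionally that V Vᵀ x_n = x_n for all n. Then θ̂ = V φ̂ and, equivalently, φ̂ = Vᵀ θ̂; in particular x_nᵀ θ̂ = x̃_nᵀ φ̂ for all n. Moreover, for every n, θ_{∖n} = V φ_{∖n}, so x_nᵀ θ_{∖n} = x̃_nᵀ φ_{∖n}. -/
open Matrix BigOperators RealInnerProductSpace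

private lemma dotV {D R : ℕ} (V : Matrix (Fin D) (Fin R) ℝ) (a : Fin D → ℝ) (b : Fin R → ℝ) :
    a ⬝ᵥ (V *ᵥ b) = (Vᵀ *ᵥ a) ⬝ᵥ b := by
  rw [Matrix.dotProduct_mulVec, Matrix.mulVec_transpose]

private lemma VtV {D R : ℕ} (V : Matrix (Fin D) (Fin R) ℝ) (hV : Vᵀ * V = 1)
    (b : Fin R → ℝ) : Vᵀ *ᵥ (V *ᵥ b) = b := by
  rw [Matrix.mulVec_mulVec, hV, Matrix.one_mulVec]

private lemma dot_self_nonneg {D : ℕ} (v : Fin D → ℝ) : 0 ≤ v ⬝ᵥ v :=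
  Finset.sum_nonneg fun i _ => mul_self_nonneg (v i)

private lemma normV {D R : ℕ} (V : Matrix (Fin D) (Fin R) ℝ) (hV : Vᵀ * V = 1)
    (b : Fin R → ℝ) : (V *ᵥ b) ⬝ᵥ (V *ᵥ b) = b ⬝ᵥ b := by
  rw [dotV, VtV V hV]

private lemma proj_shrink {D R : ℕ} (V : Matrix (Fin D) (Fin R) ℝ) (hV : Vᵀ * V = 1)
    (θ : Fin D → ℝ) : (Vᵀ *ᵥ θ) ⬝ᵥ (Vᵀ *ᵥ θ) ≤ θ ⬝ᵥ θ := by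
  set p := V *ᵥ (Vᵀ *ᵥ θ) with hp
  have h1 : p ⬝ᵥ p = (Vᵀ *ᵥ θ) ⬝ᵥ (Vᵀ *ᵥ θ) := normV V hV _
  have h2 : θ ⬝ᵥ p = (Vᵀ *ᵥ θ) ⬝ᵥ (Vᵀ *ᵥ θ) := by rw [hp, dotV]
  have h3 : 0 ≤ (θ - p) ⬝ᵥ (θ - p) := dot_self_nonneg _
  have h4 : (θ - p) ⬝ᵥ (θ - p) = θ ⬝ᵥ θ - 2 * (θ ⬝ᵥ p) + p ⬝ᵥ p := by
    simp only [sub_dotProduct, dotProduct_sub]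
    have : p ⬝ᵥ θ = θ ⬝ᵥ p := dotProduct_comm _ _
    ring_nf
    rw [this]; ring
  nlinarith [h3, h4, h1, h2]

theorem stmt_2
    (N D : ℕ) (hN : 1 ≤ N) (hD : 1 ≤ D)
    (x : Fin N → Fin D → ℝ) (y : Fin N → ℝ)
    (lam : ℝ) (hlam : 0 < lam)
    (f : ℝ → ℝ → ℝ)
    (hconv : ∀ c : ℝ, ConvexOn ℝ Set.univ (fun z => f z c))
    (hsmooth : ∀ c : ℝ, ContDiff ℝ 1 (fun z => f z c))
    (F : (Fin D → ℝ) → ℝ)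
    (hF : F = fun θ => (1 / N : ℝ) * ∑ n, f (x n ⬝ᵥ θ) (y n) + lam / 2 * (θ ⬝ᵥ θ))
    (Floo : Fin N → (Fin D → ℝ) → ℝ)
    (hFloo : ∀ n, Floo n = fun θ =>
      (1 / N : ℝ) * ∑ m ∈ Finset.univ.erase n, f (x m ⬝ᵥ θ) (y m) + lam / 2 * (θ ⬝ᵥ θ))
    (θhat : Fin D → ℝ)
    (hθhat : ∀ θ, F θhat ≤ F θ)
    (hθhatU : ∀ θ, (∀ θ', F θ ≤ F θ') → θ = θhat)
    (θloo : Fin N → Fin D → ℝ)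
    (hθloo : ∀ n θ, Floo n (θloo n) ≤ Floo n θ)
    (hθlooU : ∀ n θ, (∀ θ', Floo n θ ≤ Floo n θ') → θ = θloo n)
    (R : ℕ)
    (V : Matrix (Fin D) (Fin R) ℝ) (hV : Vᵀ * V = 1)
    (xt : Fin N → Fin R → ℝ) (hxt : ∀ n, xt n = Vᵀ *ᵥ x n)
    (hproj : ∀ n, V *ᵥ (Vᵀ *ᵥ x n) = x n)
    (FR : (Fin R → ℝ) → ℝ)
    (hFR : FR = fun φ => (1 / N : ℝ) * ∑ n, f (xt n ⬝ᵥ φ) (y n) + lam / 2 * (φ ⬝ᵥ φ))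
    (FRloo : Fin N → (Fin R → ℝ) → ℝ)
    (hFRloo : ∀ n, FRloo n = fun φ =>
      (1 / N : ℝ) * ∑ m ∈ Finset.univ.erase n, f (xt m ⬝ᵥ φ) (y m) + lam / 2 * (φ ⬝ᵥ φ))
    (φhat : Fin R → ℝ)
    (hφhat : ∀ φ, FR φhat ≤ FR φ)
    (hφhatU : ∀ φ, (∀ φ', FR φ ≤ FR φ') → φ = φhat)
    (φloo : Fin N → Fin R → ℝ)
    (hφloo : ∀ n φ, FRloo n (φloo n) ≤ FRloo n φ)
    (hφlooU : ∀ n φ, (∀ φ', FRloo n φ ≤ FRloo n φ') → φ = φloo n)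
    :
    θhat = V *ᵥ φhat ∧
    φhat = Vᵀ *ᵥ θhat ∧
    (∀ n : Fin N, x n ⬝ᵥ θhat = xt n ⬝ᵥ φhat) ∧
    (∀ n : Fin N, θloo n = V *ᵥ φloo n) ∧
    (∀ n : Fin N, x n ⬝ᵥ θloo n = xt n ⬝ᵥ φloo n) := by
  -- data term identities
  have hdata : ∀ (n : Fin N) (φ : Fin R → ℝ), x n ⬝ᵥ (V *ᵥ φ) = xt n ⬝ᵥ φ := by
    intro n φ; rw [dotV, hxt]
  have hdata' : ∀ (n : Fin N) (θ : Fin D → ℝ), xt n ⬝ᵥ (Vᵀ *ᵥ θ) = x n ⬝ᵥ θ := by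
    intro n θ
    rw [dotV Vᵀ, Matrix.transpose_transpose, hxt, hproj]
  -- F (V φ) = FR φ
  have hFV : ∀ φ, F (V *ᵥ φ) = FR φ := by
    intro φ
    simp only [hF, hFR, normV V hV]
    congr 1
    · congr 1; exact Finset.sum_congr rfl fun n _ => by rw [hdata]
  have hFVloo : ∀ n φ, Floo n (V *ᵥ φ) = FRloo n φ := by
    intro n φ
    simp only [hFloo, hFRloo, normV V hV]
    congr 1
    · congr 1; exact Finset.sum_congr rfl fun m _ => by rw [hdata]
  -- FR (Vᵀ θ) ≤ F θ
  have hle : ∀ θ, FR (Vᵀ *ᵥ θ) ≤ F θ := by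
    intro θ
    simp only [hF, hFR]
    have hsum : ∑ n, f (xt n ⬝ᵥ (Vᵀ *ᵥ θ)) (y n) = ∑ n, f (x n ⬝ᵥ θ) (y n) :=
      Finset.sum_congr rfl fun n _ => by rw [hdata']
    rw [hsum]
    have := proj_shrink V hV θ
    have hlam2 : (0:ℝ) ≤ lam / 2 := by positivity
    nlinarith [mul_le_mul_of_nonneg_left this hlam2]
  have hleloo : ∀ n θ, FRloo n (Vᵀ *ᵥ θ) ≤ Floo n θ := by
    intro n θ
    simp only [hFloo, hFRloo]
    have hsum : ∑ m ∈ Finset.univ.erase n, f (xt m ⬝ᵥ (Vᵀ *ᵥ θ)) (y m)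
        = ∑ m ∈ Finset.univ.erase n, f (x m ⬝ᵥ θ) (y m) :=
      Finset.sum_congr rfl fun m _ => by rw [hdata']
    rw [hsum]
    have := proj_shrink V hV θ
    have hlam2 : (0:ℝ) ≤ lam / 2 := by positivity
    nlinarith [mul_le_mul_of_nonneg_left this hlam2]
  -- V φhat is a global minimizer of F
  have h1 : V *ᵥ φhat = θhat := by
    apply hθhatU
    intro θ
    calc F (V *ᵥ φhat) = FR φhat := hFV _
      _ ≤ FR (Vᵀ *ᵥ θ) := hφhat _
      _ ≤ F θ := hle θ
  have h2 : φhat = Vᵀ *ᵥ θhat := by rw [← h1, VtV V hV]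
  have h4 : ∀ n, θloo n = V *ᵥ φloo n := by
    intro n
    symm
    apply hθlooU
    intro θ
    calc Floo n (V *ᵥ φloo n) = FRloo n (φloo n) := hFVloo _ _
      _ ≤ FRloo n (Vᵀ *ᵥ θ) := hφloo _ _
      _ ≤ Floo n θ := hleloo _ θ
  refine ⟨h1.symm, h2, fun n => ?_, h4, fun n => ?_⟩
  · rw [← h1, hdata]
  · rw [h4, hdata]
end

section
/- For every n = 1, …, N, the full and leave-one-out minimizers satisfy ‖θ̂ − θ_{∖n}‖₂ ≤ (1/(N λ)) · |D_n^{(1)}| · ‖x_n‖₂. -/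
open Matrix BigOperators RealInnerProductSpace

/-!
Both minimisers are stationary. Testing the two first-order conditions against
`Δ = θ̂ - θ_{∖n}` and subtracting, the ridge terms give `λ ‖Δ‖²`, each loss term with `m ≠ n`
gives `(f'(x_m ⬝ θ̂) - f'(x_m ⬝ θ_{∖n})) (x_m ⬝ Δ) ≥ 0` because the derivative of a convex
function is monotone, and only the `n`-th term `(1/N) D_n (x_n ⬝ Δ)` of the full risk is left.
Hence `λ ‖Δ‖² ≤ (1/N) |D_n| |x_n ⬝ Δ| ≤ (1/N) |D_n| ‖x_n‖ ‖Δ‖` by Cauchy–Schwarz.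
-/

lemma ConvexOn.deriv_sub_mul_sub_nonneg {g : ℝ → ℝ} (hg : ConvexOn ℝ Set.univ g)
    (hd : Differentiable ℝ g) (a b : ℝ) : 0 ≤ (deriv g b - deriv g a) * (b - a) := by
  have hmono := hg.monotoneOn_deriv fun z _ => hd z
  rcases le_total a b with hab | hba
  · exact mul_nonneg (sub_nonneg.2 (hmono trivial trivial hab)) (sub_nonneg.2 hab)
  · exact mul_nonneg_of_nonpos_of_nonpos (sub_nonpos.2 (hmono trivial trivial hba))
      (sub_nonpos.2 hba)

lemma abs_dotProduct_le_sqrt_mul_sqrt {ι : Type*} [Fintype ι] (v w : ι → ℝ) :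
    |v ⬝ᵥ w| ≤ √(v ⬝ᵥ v) * √(w ⬝ᵥ w) := by
  have hcs : ∀ u : ι → ℝ, u ⬝ᵥ w ≤ √(u ⬝ᵥ u) * √(w ⬝ᵥ w) := fun u => by
    simpa [dotProduct, sq] using Real.sum_mul_le_sqrt_mul_sqrt Finset.univ u w
  refine abs_le.2 ⟨?_, hcs v⟩
  simpa [neg_le] using hcs (-v)

section RidgeRisk

variable {ι κ : Type*} [Fintype ι]

lemma hasDerivAt_dotProduct_add_smul (v θ w : ι → ℝ) (t : ℝ) :
    HasDerivAt (fun t : ℝ => v ⬝ᵥ (θ + t • w)) (v ⬝ᵥ w) t := by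
  simp only [dotProduct_add, dotProduct_smul, smul_eq_mul]
  simpa using ((hasDerivAt_id t).mul_const (v ⬝ᵥ w)).const_add (v ⬝ᵥ θ)

lemma hasDerivAt_dotProduct_self_add_smul (θ w : ι → ℝ) :
    HasDerivAt (fun t : ℝ => (θ + t • w) ⬝ᵥ (θ + t • w)) (2 * (θ ⬝ᵥ w)) 0 := by
  have hexpand : (fun t : ℝ => (θ + t • w) ⬝ᵥ (θ + t • w)) =
      fun t => θ ⬝ᵥ θ + t * (2 * (θ ⬝ᵥ w)) + t ^ 2 * (w ⬝ᵥ w) := by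
    ext t
    simp only [dotProduct_add, add_dotProduct, dotProduct_smul, smul_dotProduct, smul_eq_mul,
      dotProduct_comm w θ]
    ring
  rw [hexpand]
  simpa using (((hasDerivAt_id (0 : ℝ)).mul_const (2 * (θ ⬝ᵥ w))).const_add (θ ⬝ᵥ θ)).fun_add
    ((hasDerivAt_pow 2 (0 : ℝ)).mul_const (w ⬝ᵥ w))

noncomputable def ridgeRisk (s : Finset κ) (ℓ : κ → ℝ → ℝ) (x : κ → ι → ℝ) (lam : ℝ)
    (θ : ι → ℝ) : ℝ :=
  ∑ m ∈ s, ℓ m (x m ⬝ᵥ θ) + lam / 2 * (θ ⬝ᵥ θ)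

variable {s : Finset κ} {ℓ : κ → ℝ → ℝ} {x : κ → ι → ℝ} {lam : ℝ} {θ : ι → ℝ}

lemma hasDerivAt_ridgeRisk_add_smul (hℓ : ∀ m ∈ s, DifferentiableAt ℝ (ℓ m) (x m ⬝ᵥ θ))
    (w : ι → ℝ) :
    HasDerivAt (fun t : ℝ => ridgeRisk s ℓ x lam (θ + t • w))
      (∑ m ∈ s, deriv (ℓ m) (x m ⬝ᵥ θ) * (x m ⬝ᵥ w) + lam * (θ ⬝ᵥ w)) 0 := by
  have hloss : ∀ m ∈ s, HasDerivAt (fun t : ℝ => ℓ m (x m ⬝ᵥ (θ + t • w)))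
      (deriv (ℓ m) (x m ⬝ᵥ θ) * (x m ⬝ᵥ w)) 0 := fun m hm =>
    (hℓ m hm).hasDerivAt.comp_of_eq 0 (hasDerivAt_dotProduct_add_smul _ _ _ _) (by simp)
  have hreg := (hasDerivAt_dotProduct_self_add_smul θ w).const_mul (lam / 2)
  exact ((HasDerivAt.fun_sum hloss).fun_add hreg).congr_deriv (by ring)

lemma sum_deriv_mul_add_eq_zero_of_isMinOn (hℓ : ∀ m ∈ s, DifferentiableAt ℝ (ℓ m) (x m ⬝ᵥ θ))
    (hθ : IsMinOn (ridgeRisk s ℓ x lam) Set.univ θ) (w : ι → ℝ) :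
    ∑ m ∈ s, deriv (ℓ m) (x m ⬝ᵥ θ) * (x m ⬝ᵥ w) + lam * (θ ⬝ᵥ w) = 0 := by
  refine IsLocalMin.hasDerivAt_eq_zero (.of_forall fun t => ?_)
    (hasDerivAt_ridgeRisk_add_smul hℓ w)
  simpa using isMinOn_univ_iff.1 hθ (θ + t • w)

variable [DecidableEq κ] {n : κ} {θ' : ι → ℝ}

lemma mul_dotProduct_self_sub_le_of_isMinOn_erase (hn : n ∈ s)
    (hconv : ∀ m ∈ s, ConvexOn ℝ Set.univ (ℓ m)) (hℓ : ∀ m ∈ s, Differentiable ℝ (ℓ m))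
    (hθ : IsMinOn (ridgeRisk s ℓ x lam) Set.univ θ)
    (hθ' : IsMinOn (ridgeRisk (s.erase n) ℓ x lam) Set.univ θ') :
    lam * ((θ - θ') ⬝ᵥ (θ - θ')) ≤ -(deriv (ℓ n) (x n ⬝ᵥ θ) * (x n ⬝ᵥ (θ - θ'))) := by
  set Δ := θ - θ'
  have hfull := sum_deriv_mul_add_eq_zero_of_isMinOn (fun m hm => (hℓ m hm).differentiableAt) hθ Δ
  have hloo := sum_deriv_mul_add_eq_zero_of_isMinOn
    (fun m hm => (hℓ m (Finset.mem_of_mem_erase hm)).differentiableAt) hθ' Δ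
  rw [← Finset.add_sum_erase _ _ hn] at hfull
  have hmono : 0 ≤ ∑ m ∈ s.erase n,
      (deriv (ℓ m) (x m ⬝ᵥ θ) - deriv (ℓ m) (x m ⬝ᵥ θ')) * (x m ⬝ᵥ Δ) :=
    Finset.sum_nonneg fun m hm => by
      rw [dotProduct_sub]
      exact (hconv m (Finset.mem_of_mem_erase hm)).deriv_sub_mul_sub_nonneg
        (hℓ m (Finset.mem_of_mem_erase hm)) _ _
  simp only [sub_mul, Finset.sum_sub_distrib] at hmono
  rw [sub_dotProduct, mul_sub]
  linarith

theorem sqrt_dotProduct_sub_le_of_isMinOn_erase (hlam : 0 < lam) (hn : n ∈ s)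
    (hconv : ∀ m ∈ s, ConvexOn ℝ Set.univ (ℓ m)) (hℓ : ∀ m ∈ s, Differentiable ℝ (ℓ m))
    (hθ : IsMinOn (ridgeRisk s ℓ x lam) Set.univ θ)
    (hθ' : IsMinOn (ridgeRisk (s.erase n) ℓ x lam) Set.univ θ') :
    √((θ - θ') ⬝ᵥ (θ - θ')) ≤ |deriv (ℓ n) (x n ⬝ᵥ θ)| * √(x n ⬝ᵥ x n) / lam := by
  set r := √((θ - θ') ⬝ᵥ (θ - θ'))
  set c := |deriv (ℓ n) (x n ⬝ᵥ θ)| * √(x n ⬝ᵥ x n)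
  have hr : r ^ 2 = (θ - θ') ⬝ᵥ (θ - θ') :=
    Real.sq_sqrt (Finset.sum_nonneg fun i _ => mul_self_nonneg _)
  have hquad : lam * r ^ 2 ≤ c * r := calc
    lam * r ^ 2 ≤ -(deriv (ℓ n) (x n ⬝ᵥ θ) * (x n ⬝ᵥ (θ - θ'))) := by
      rw [hr]; exact mul_dotProduct_self_sub_le_of_isMinOn_erase hn hconv hℓ hθ hθ'
    _ ≤ |deriv (ℓ n) (x n ⬝ᵥ θ)| * |x n ⬝ᵥ (θ - θ')| := by
      rw [← abs_mul]; exact neg_le_abs _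
    _ ≤ c * r := by
      rw [mul_assoc]
      exact mul_le_mul_of_nonneg_left (abs_dotProduct_le_sqrt_mul_sqrt _ _) (abs_nonneg _)
  have hc : 0 ≤ c := by positivity
  rw [le_div_iff₀ hlam]
  nlinarith

end RidgeRisk

theorem stmt_4_general
    (N D : ℕ)
    (x : Fin N → Fin D → ℝ) (y : Fin N → ℝ)
    (lam : ℝ) (hlam : 0 < lam)
    (f : ℝ → ℝ → ℝ)
    (hconv : ∀ c : ℝ, ConvexOn ℝ Set.univ (fun z => f z c))
    (hsmooth : ∀ c : ℝ, ContDiff ℝ 1 (fun z => f z c))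
    (F : (Fin D → ℝ) → ℝ)
    (hF : F = fun θ => (1 / N : ℝ) * ∑ n, f (x n ⬝ᵥ θ) (y n) + lam / 2 * (θ ⬝ᵥ θ))
    (Floo : Fin N → (Fin D → ℝ) → ℝ)
    (hFloo : ∀ n, Floo n = fun θ =>
      (1 / N : ℝ) * ∑ m ∈ Finset.univ.erase n, f (x m ⬝ᵥ θ) (y m) + lam / 2 * (θ ⬝ᵥ θ))
    (θhat : Fin D → ℝ)
    (hθhat : ∀ θ, F θhat ≤ F θ)
    (θloo : Fin N → Fin D → ℝ)
    (hθloo : ∀ n θ, Floo n (θloo n) ≤ Floo n θ)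
    (D1 : Fin N → ℝ)
    (hD1 : ∀ n, D1 n = deriv (fun z => f z (y n)) (x n ⬝ᵥ θhat))
    :
    ∀ n : Fin N,
      Real.sqrt ((θhat - θloo n) ⬝ᵥ (θhat - θloo n)) ≤
        1 / (N * lam) * (|D1 n| * Real.sqrt (x n ⬝ᵥ x n)) := by
  intro n
  set ℓ : Fin N → ℝ → ℝ := fun m z => (1 / N : ℝ) * f z (y m)
  have hℓ : ∀ m, Differentiable ℝ (fun z => f z (y m)) := fun m =>
    (hsmooth (y m)).differentiable one_ne_zero
  have hFrisk : F = ridgeRisk Finset.univ ℓ x lam := by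
    rw [hF]; ext θ; simp only [ridgeRisk, ℓ, Finset.mul_sum]
  have hFloorisk : Floo n = ridgeRisk (Finset.univ.erase n) ℓ x lam := by
    rw [hFloo]; ext θ; simp only [ridgeRisk, ℓ, Finset.mul_sum]
  have hderiv : deriv (ℓ n) (x n ⬝ᵥ θhat) = 1 / N * D1 n := by
    rw [hD1]; exact deriv_const_mul _ (hℓ n _)
  have key := sqrt_dotProduct_sub_le_of_isMinOn_erase (ℓ := ℓ) hlam (Finset.mem_univ n)
    (fun m _ => (hconv (y m)).smul (by positivity)) (fun m _ => (hℓ m).const_mul _)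
    (hFrisk ▸ isMinOn_univ_iff.2 hθhat) (hFloorisk ▸ isMinOn_univ_iff.2 (hθloo n))
  rw [hderiv, abs_mul, abs_of_nonneg (by positivity : (0 : ℝ) ≤ 1 / N)] at key
  exact key.trans_eq (by ring)

theorem stmt_4
    (N D : ℕ) (hN : 1 ≤ N) (hD : 1 ≤ D)
    (x : Fin N → Fin D → ℝ) (y : Fin N → ℝ)
    (lam : ℝ) (hlam : 0 < lam)
    (f : ℝ → ℝ → ℝ)
    (hconv : ∀ c : ℝ, ConvexOn ℝ Set.univ (fun z => f z c))
    (hsmooth : ∀ c : ℝ, ContDiff ℝ 1 (fun z => f z c))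
    (F : (Fin D → ℝ) → ℝ)
    (hF : F = fun θ => (1 / N : ℝ) * ∑ n, f (x n ⬝ᵥ θ) (y n) + lam / 2 * (θ ⬝ᵥ θ))
    (Floo : Fin N → (Fin D → ℝ) → ℝ)
    (hFloo : ∀ n, Floo n = fun θ =>
      (1 / N : ℝ) * ∑ m ∈ Finset.univ.erase n, f (x m ⬝ᵥ θ) (y m) + lam / 2 * (θ ⬝ᵥ θ))
    (θhat : Fin D → ℝ)
    (hθhat : ∀ θ, F θhat ≤ F θ)
    (hθhatU : ∀ θ, (∀ θ', F θ ≤ F θ') → θ = θhat)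
    (θloo : Fin N → Fin D → ℝ)
    (hθloo : ∀ n θ, Floo n (θloo n) ≤ Floo n θ)
    (hθlooU : ∀ n θ, (∀ θ', Floo n θ ≤ Floo n θ') → θ = θloo n)
    (D1 : Fin N → ℝ)
    (hD1 : ∀ n, D1 n = deriv (fun z => f z (y n)) (x n ⬝ᵥ θhat))
    :
    ∀ n : Fin N,
      Real.sqrt ((θhat - θloo n) ⬝ᵥ (θhat - θloo n)) ≤
        1 / (N * lam) * (|D1 n| * Real.sqrt (x n ⬝ᵥ x n)) :=
  stmt_4_general N D x y lam hlam f hconv hsmooth F hF Floo hFloo θhat hθhat θloo hθloo D1 hD1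
end

section
/- For every n = 1, …, N and every s ∈ [0,1], the point on the segment between θ̂ and θ_{∖n} satisfies |x_nᵀ((1−s)θ̂ + s θ_{∖n})| ≤ |x_nᵀθ̂| + |D_n^{(1)}| · ‖x_n‖₂² / (N λ). -/
/-!
Split `F = F_{∖n} + g / N` with `g = f (x_nᵀ ·, y_n)`. Since `θ̂` minimises `F` and `g` is
differentiable, strong convexity of `F_{∖n}` along the segment from `θ̂` gives quadratic growth
`F_{∖n} θ̂ + λ/2 ‖θ - θ̂‖² ≤ F_{∖n} θ + D_n^{(1)}/N · x_nᵀ(θ - θ̂)`; together with quadratic growth of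
`F_{∖n}` at `θ_{∖n}` this yields `λ ‖θ_{∖n} - θ̂‖² ≤ D_n^{(1)}/N · x_nᵀ(θ_{∖n} - θ̂)`, and
Cauchy–Schwarz turns it into `|x_nᵀ(θ_{∖n} - θ̂)| ≤ |D_n^{(1)}| ‖x_n‖² / (N λ)`. The point on the
segment moves `x_nᵀθ̂` by at most that much.
-/

open Matrix BigOperators RealInnerProductSpace

open Set Filter Topology EuclideanSpace

theorem ConvexOn.finset_sum {𝕜 E β ι : Type*} [Semiring 𝕜] [PartialOrder 𝕜] [AddCommMonoid E]
    [AddCommMonoid β] [PartialOrder β] [IsOrderedAddMonoid β] [SMul 𝕜 E] [Module 𝕜 β]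
    [IsStrictOrderedRing 𝕜] [PosSMulMono 𝕜 β] {s : Set E} {t : Finset ι} {f : ι → E → β}
    (hs : Convex 𝕜 s) (hf : ∀ i ∈ t, ConvexOn 𝕜 s (f i)) :
    ConvexOn 𝕜 s fun x => ∑ i ∈ t, f i x := by
  simpa only [← Finset.sum_apply] using
    Finset.sum_induction f (ConvexOn 𝕜 s) (fun _ _ => ConvexOn.add) (convexOn_const 0 hs) hf

section StrongConvexity

variable {E : Type*} [NormedAddCommGroup E]

theorem StrongConvexOn.add_sq_norm_le_of_isMin_add [NormedSpace ℝ E] {φ ψ : E → ℝ}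
    {m c : ℝ} {w θ : E} (hφ : StrongConvexOn univ m φ) (hψ : HasLineDerivAt ℝ ψ c w (θ - w))
    (hmin : ∀ v, φ w + ψ w ≤ φ v + ψ v) :
    φ w + m / 2 * ‖θ - w‖ ^ 2 ≤ φ θ + c := by
  have hgap : ∀ t ∈ Ioc (0 : ℝ) 1,
      φ w - φ θ + (1 - t) * (m / 2 * ‖θ - w‖ ^ 2) ≤ t⁻¹ • (ψ (w + t • (θ - w)) - ψ w) := by
    rintro t ⟨ht0, ht1⟩
    have hseg : (1 - t) • w + t • θ = w + t • (θ - w) := by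
      simp only [smul_sub, sub_smul, one_smul]; abel
    have hconv := hφ.2 (mem_univ w) (mem_univ θ) (sub_nonneg.2 ht1) ht0.le
      (sub_add_cancel 1 t)
    rw [hseg, norm_sub_rev] at hconv
    simp only [smul_eq_mul] at hconv ⊢
    rw [le_inv_mul_iff₀ ht0]
    nlinarith [hmin (w + t • (θ - w))]
  have hlim : Tendsto (fun t : ℝ => φ w - φ θ + (1 - t) * (m / 2 * ‖θ - w‖ ^ 2)) (𝓝[>] 0)
      (𝓝 (φ w - φ θ + m / 2 * ‖θ - w‖ ^ 2)) := by
    have : Continuous fun t : ℝ => φ w - φ θ + (1 - t) * (m / 2 * ‖θ - w‖ ^ 2) := by fun_prop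
    simpa using (this.tendsto 0).mono_left nhdsWithin_le_nhds
  have := le_of_tendsto_of_tendsto hlim hψ.tendsto_slope_zero_right <|
    eventually_of_mem (Ioc_mem_nhdsGT zero_lt_one) hgap
  linarith

theorem StrongConvexOn.add_sq_norm_le_of_isMin [NormedSpace ℝ E] {φ : E → ℝ} {m : ℝ} {w : E}
    (hφ : StrongConvexOn univ m φ) (hmin : ∀ v, φ w ≤ φ v) (θ : E) :
    φ w + m / 2 * ‖θ - w‖ ^ 2 ≤ φ θ := by
  simpa using hφ.add_sq_norm_le_of_isMin_add (ψ := 0) ((hasFDerivAt_const 0 w).hasLineDerivAt _)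
    (by simpa using hmin)

theorem ConvexOn.strongConvexOn_add_sq_norm [InnerProductSpace ℝ E] {s : Set E} {C : E → ℝ}
    (hC : ConvexOn ℝ s C) (m : ℝ) : StrongConvexOn s m fun v => C v + m / 2 * ‖v‖ ^ 2 :=
  strongConvexOn_iff_convex.2 (by simpa using hC)

theorem abs_inner_le_of_mul_sq_norm_le [InnerProductSpace ℝ E] {u d : E} {m c : ℝ} (hm : 0 < m)
    (h : m * ‖d‖ ^ 2 ≤ c * ⟪u, d⟫) : |⟪u, d⟫| ≤ |c| * ‖u‖ ^ 2 / m := by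
  have hcs : |⟪u, d⟫| ≤ ‖u‖ * ‖d‖ := abs_real_inner_le_norm u d
  have hd : m * ‖d‖ ≤ |c| * ‖u‖ := by
    rcases (norm_nonneg d).eq_or_lt with hd0 | hd0
    · rw [← hd0, mul_zero]; positivity
    · refine le_of_mul_le_mul_right ?_ hd0
      nlinarith [le_abs_self (c * ⟪u, d⟫), abs_mul c ⟪u, d⟫, abs_nonneg c]
  rw [le_div_iff₀ hm]
  nlinarith [norm_nonneg u]

theorem StrongConvexOn.abs_inner_sub_le_of_isMin [InnerProductSpace ℝ E] {φ : E → ℝ}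
    {g : ℝ → ℝ} {m c g' : ℝ} {u w w' : E} (hφ : StrongConvexOn univ m φ) (hm : 0 < m)
    (hg : HasDerivAt g g' ⟪u, w⟫)
    (hw : ∀ v, φ w + c * g ⟪u, w⟫ ≤ φ v + c * g ⟪u, v⟫) (hw' : ∀ v, φ w' ≤ φ v) :
    |⟪u, w' - w⟫| ≤ |c * g'| * ‖u‖ ^ 2 / m := by
  have hlin : HasLineDerivAt ℝ (fun v => c * g ⟪u, v⟫) (c * g' * ⟪u, w' - w⟫) w (w' - w) := by
    simpa only [mul_assoc, Function.comp_apply, _root_.smul_apply, coe_innerSL_apply,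
      smul_eq_mul] using
      ((hg.comp_hasFDerivAt w (innerSL ℝ u).hasFDerivAt).const_mul c).hasLineDerivAt (w' - w)
  have hgrowth := hφ.add_sq_norm_le_of_isMin_add hlin hw
  have hgrowth' := hφ.add_sq_norm_le_of_isMin hw' w
  rw [norm_sub_rev] at hgrowth'
  exact abs_inner_le_of_mul_sq_norm_le hm (by linarith)

end StrongConvexity

namespace EuclideanSpace

variable {ι : Type*} [Fintype ι]

theorem dotProduct_ofLp (v : ι → ℝ) (w : EuclideanSpace ℝ ι) :
    v ⬝ᵥ WithLp.ofLp w = ⟪WithLp.toLp 2 v, w⟫ := by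
  simp [inner_eq_star_dotProduct, dotProduct_comm]

theorem ofLp_dotProduct_ofLp_self (w : EuclideanSpace ℝ ι) :
    WithLp.ofLp w ⬝ᵥ WithLp.ofLp w = ‖w‖ ^ 2 := by
  rw [← real_inner_self_eq_norm_sq, inner_eq_star_dotProduct, star_trivial]

end EuclideanSpace

theorem abs_one_sub_mul_add_mul_le {a b s : ℝ} (hs : s ∈ Icc (0 : ℝ) 1) :
    |(1 - s) * a + s * b| ≤ |a| + |b - a| := by
  calc |(1 - s) * a + s * b| = |a + s * (b - a)| := by ring_nf
    _ ≤ |a| + |b - a| := by grw [abs_add_le, abs_mul, abs_of_nonneg hs.1, hs.2, one_mul]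

theorem stmt_10_general
    (N D : ℕ)
    (x : Fin N → Fin D → ℝ) (y : Fin N → ℝ)
    (lam : ℝ) (hlam : 0 < lam)
    (f : ℝ → ℝ → ℝ)
    (hconv : ∀ c : ℝ, ConvexOn ℝ Set.univ (fun z => f z c))
    (hsmooth : ∀ c : ℝ, ContDiff ℝ 1 (fun z => f z c))
    (F : (Fin D → ℝ) → ℝ)
    (hF : F = fun θ => (1 / N : ℝ) * ∑ n, f (x n ⬝ᵥ θ) (y n) + lam / 2 * (θ ⬝ᵥ θ))
    (Floo : Fin N → (Fin D → ℝ) → ℝ)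
    (hFloo : ∀ n, Floo n = fun θ =>
      (1 / N : ℝ) * ∑ m ∈ Finset.univ.erase n, f (x m ⬝ᵥ θ) (y m) + lam / 2 * (θ ⬝ᵥ θ))
    (θhat : Fin D → ℝ)
    (hθhat : ∀ θ, F θhat ≤ F θ)
    (θloo : Fin N → Fin D → ℝ)
    (hθloo : ∀ n θ, Floo n (θloo n) ≤ Floo n θ)
    (D1 : Fin N → ℝ)
    (hD1 : ∀ n, D1 n = deriv (fun z => f z (y n)) (x n ⬝ᵥ θhat))
    :
    ∀ n : Fin N, ∀ s ∈ Set.Icc (0 : ℝ) 1,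
      |x n ⬝ᵥ ((1 - s) • θhat + s • θloo n)| ≤
        |x n ⬝ᵥ θhat| + |D1 n| * (x n ⬝ᵥ x n) / (N * lam) := by
  rintro n s hs
  -- `θ ⬝ᵥ θ` is strongly convex for the Euclidean norm, not for the sup norm of `Fin D → ℝ`.
  let φ : EuclideanSpace ℝ (Fin D) → ℝ := fun v => Floo n (WithLp.ofLp v)
  have hsplit : ∀ v, F (WithLp.ofLp v) = φ v + 1 / N * f ⟪WithLp.toLp 2 (x n), v⟫ (y n) :=
    fun v => by
      simp only [φ, hF, hFloo, ← Finset.add_sum_erase _ _ (Finset.mem_univ n), dotProduct_ofLp]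
      ring
  have hφ : StrongConvexOn univ lam φ := by
    have hC : ConvexOn ℝ univ fun v : EuclideanSpace ℝ (Fin D) =>
        (1 / N : ℝ) • ∑ m ∈ Finset.univ.erase n, f (x m ⬝ᵥ WithLp.ofLp v) (y m) := by
      refine ConvexOn.smul (by positivity) (ConvexOn.finset_sum convex_univ fun m _ => ?_)
      simpa only [dotProduct_ofLp, coe_innerₛₗ_apply, preimage_univ, Function.comp_def] using
        (hconv (y m)).comp_linearMap (innerₛₗ ℝ (WithLp.toLp 2 (x m)))
    simpa only [φ, hFloo, ofLp_dotProduct_ofLp_self, smul_eq_mul] using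
      hC.strongConvexOn_add_sq_norm lam
  have hg : HasDerivAt (fun z => f z (y n)) (D1 n)
      ⟪WithLp.toLp 2 (x n), WithLp.toLp 2 θhat⟫ := by
    rw [hD1, ← dotProduct_ofLp]
    exact ((hsmooth (y n)).differentiable one_ne_zero _).hasDerivAt
  have hbound := hφ.abs_inner_sub_le_of_isMin (c := 1 / N) (w' := WithLp.toLp 2 (θloo n)) hlam hg
    (fun v => by simpa only [← hsplit] using hθhat _) (fun _ => hθloo n _)
  rw [inner_sub_right, ← dotProduct_ofLp, ← dotProduct_ofLp, ← ofLp_dotProduct_ofLp_self, abs_mul,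
    WithLp.ofLp_toLp,
    abs_of_nonneg (by positivity : (0 : ℝ) ≤ 1 / N)] at hbound
  calc |x n ⬝ᵥ ((1 - s) • θhat + s • θloo n)|
        = |(1 - s) * (x n ⬝ᵥ θhat) + s * (x n ⬝ᵥ θloo n)| := by
          simp only [dotProduct_add, dotProduct_smul, smul_eq_mul]
    _ ≤ |x n ⬝ᵥ θhat| + |x n ⬝ᵥ θloo n - x n ⬝ᵥ θhat| := abs_one_sub_mul_add_mul_le hs
    _ ≤ |x n ⬝ᵥ θhat| + 1 / N * |D1 n| * (x n ⬝ᵥ x n) / lam := by grw [hbound]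
    _ = |x n ⬝ᵥ θhat| + |D1 n| * (x n ⬝ᵥ x n) / (N * lam) := by ring

theorem stmt_10
    (N D : ℕ) (hN : 1 ≤ N) (hD : 1 ≤ D)
    (x : Fin N → Fin D → ℝ) (y : Fin N → ℝ)
    (lam : ℝ) (hlam : 0 < lam)
    (f : ℝ → ℝ → ℝ)
    (hconv : ∀ c : ℝ, ConvexOn ℝ Set.univ (fun z => f z c))
    (hsmooth : ∀ c : ℝ, ContDiff ℝ 1 (fun z => f z c))
    (F : (Fin D → ℝ) → ℝ)
    (hF : F = fun θ => (1 / N : ℝ) * ∑ n, f (x n ⬝ᵥ θ) (y n) + lam / 2 * (θ ⬝ᵥ θ))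
    (Floo : Fin N → (Fin D → ℝ) → ℝ)
    (hFloo : ∀ n, Floo n = fun θ =>
      (1 / N : ℝ) * ∑ m ∈ Finset.univ.erase n, f (x m ⬝ᵥ θ) (y m) + lam / 2 * (θ ⬝ᵥ θ))
    (θhat : Fin D → ℝ)
    (hθhat : ∀ θ, F θhat ≤ F θ)
    (hθhatU : ∀ θ, (∀ θ', F θ ≤ F θ') → θ = θhat)
    (θloo : Fin N → Fin D → ℝ)
    (hθloo : ∀ n θ, Floo n (θloo n) ≤ Floo n θ)
    (hθlooU : ∀ n θ, (∀ θ', Floo n θ ≤ Floo n θ') → θ = θloo n)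
    (D1 : Fin N → ℝ)
    (hD1 : ∀ n, D1 n = deriv (fun z => f z (y n)) (x n ⬝ᵥ θhat))
    :
    ∀ n : Fin N, ∀ s ∈ Set.Icc (0 : ℝ) 1,
      |x n ⬝ᵥ ((1 - s) • θhat + s • θloo n)| ≤
        |x n ⬝ᵥ θhat| + |D1 n| * (x n ⬝ᵥ x n) / (N * lam) :=
  stmt_10_general N D x y lam hlam f hconv hsmooth F hF Floo hFloo θhat hθhat θloo hθloo D1 hD1
end

section
/- Let λ > 0, let B, B̃ ∈ ℝ^{D×D} be symmetric positive-semidefinite matrices, and set H = B + λ I_D and H̃ = B̃ + λ I_D (both positive definite). Suppose 𝓑 ⊆ ℝ^D is a linear subspace with H v = H̃ v for all v ∈ 𝓑, and let 𝓐 = H(𝓑) be its image under H. Then: (i) H⁻¹ w = H̃⁻¹ w for all w ∈ 𝓐; and (ii) for every x ∈ ℝ^D, |xᵀ H̃⁻¹ x − xᵀ H⁻¹ x| ≤ ‖P_{𝓐}^⊥ x‖₂² / λ, where P_{𝓐}^⊥ denotes the orthogonal projection onto the orthogonal complement of 𝓐. -/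
/-!
`H⁻¹` and `H̃⁻¹` agree on `𝓐 = H 𝓑`, so the symmetric matrix `H̃⁻¹ - H⁻¹` annihilates `𝓐`, and its
quadratic form at `x = a + b` (`a ∈ 𝓐`, `b ∈ 𝓐ᗮ`) only sees `b`. Both `bᵀ H⁻¹ b` and `bᵀ H̃⁻¹ b` lie
in `[0, ‖b‖² / λ]` because `H, H̃ ≥ λ`, so their difference is at most `‖b‖² / λ` in absolute value.
-/

open Matrix

namespace Matrix

variable {n : Type*}

lemma inv_mulVec_mulVec_eq_of_mulVec_eq [Fintype n] [DecidableEq n] {K : Type*} [Field K]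
    {A A' : Matrix n n K} (hA : IsUnit A) (hA' : IsUnit A') {v : n → K}
    (h : A *ᵥ v = A' *ᵥ v) : A⁻¹ *ᵥ (A *ᵥ v) = A'⁻¹ *ᵥ (A *ᵥ v) := by
  rw [mulVec_mulVec, nonsing_inv_mul _ ((isUnit_iff_isUnit_det A).1 hA), h, mulVec_mulVec,
    nonsing_inv_mul _ ((isUnit_iff_isUnit_det A').1 hA')]

lemma IsSymm.add_dotProduct_mulVec_add_of_mulVec_eq_zero [Fintype n] {R : Type*} [CommSemiring R]
    {M : Matrix n n R} (hM : M.IsSymm) {a : n → R} (ha : M *ᵥ a = 0) (b : n → R) :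
    (a + b) ⬝ᵥ (M *ᵥ (a + b)) = b ⬝ᵥ (M *ᵥ b) := by
  have ha' : a ᵥ* M = 0 := by rw [← mulVec_transpose, hM.eq, ha]
  rw [mulVec_add, ha, zero_add, add_dotProduct, dotProduct_mulVec a, ha', zero_dotProduct,
    zero_add]

lemma PosSemidef.posDef_add_smul_one [DecidableEq n] {B : Matrix n n ℝ} {lam : ℝ}
    (hB : B.PosSemidef) (hlam : 0 < lam) : (B + lam • 1).PosDef :=
  PosDef.posSemidef_add hB (PosDef.one.smul hlam)

/-- With `x = (B + λ) y`, `x ⬝ y = yᵀBy + λ‖y‖²` and `‖x‖² - λ (x ⬝ y) = ‖By‖² + λ yᵀBy`. -/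
lemma PosSemidef.dotProduct_inv_add_smul_one_mulVec_mem_Icc [Fintype n] [DecidableEq n]
    {B : Matrix n n ℝ} {lam : ℝ} (hB : B.PosSemidef) (hlam : 0 < lam) (x : n → ℝ) :
    x ⬝ᵥ ((B + lam • 1)⁻¹ *ᵥ x) ∈ Set.Icc 0 (x ⬝ᵥ x / lam) := by
  set y := (B + lam • 1)⁻¹ *ᵥ x
  have hx : (B + lam • 1) *ᵥ y = x := by
    rw [mulVec_mulVec,
      mul_nonsing_inv _ ((isUnit_iff_isUnit_det _).1 (hB.posDef_add_smul_one hlam).isUnit),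
      one_mulVec]
  rw [add_mulVec, smul_mulVec, one_mulVec] at hx
  have hBy : 0 ≤ y ⬝ᵥ (B *ᵥ y) := by simpa using hB.dotProduct_mulVec_nonneg y
  have hxy : x ⬝ᵥ y = y ⬝ᵥ (B *ᵥ y) + lam * (y ⬝ᵥ y) := by
    rw [← hx, add_dotProduct, smul_dotProduct, dotProduct_comm, smul_eq_mul]
  have hxx : x ⬝ᵥ x - lam * (x ⬝ᵥ y) = B *ᵥ y ⬝ᵥ B *ᵥ y + lam * (y ⬝ᵥ (B *ᵥ y)) := by
    rw [hxy, ← hx]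
    simp only [add_dotProduct, dotProduct_add, smul_dotProduct, dotProduct_smul, smul_eq_mul,
      dotProduct_comm (B *ᵥ y) y]
    ring
  constructor
  · rw [hxy]
    have := dotProduct_self_star_nonneg y
    rw [star_trivial] at this
    positivity
  · rw [le_div_iff₀ hlam]
    have := dotProduct_self_star_nonneg (B *ᵥ y)
    rw [star_trivial] at this
    linarith [mul_nonneg hlam.le hBy]

end Matrix

lemma EuclideanSpace.real_norm_sq_eq_dotProduct {n : Type*} [Fintype n] (x : EuclideanSpace ℝ n) :
    ‖x‖ ^ 2 = x.ofLp ⬝ᵥ x.ofLp := by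
  rw [EuclideanSpace.real_norm_sq_eq]
  simp only [dotProduct, sq]

theorem stmt_12
    (D : ℕ) (lam : ℝ) (hlam : 0 < lam)
    (B Bt : Matrix (Fin D) (Fin D) ℝ) (hB : B.PosSemidef) (hBt : Bt.PosSemidef)
    (H Ht : Matrix (Fin D) (Fin D) ℝ)
    (hH : H = B + lam • 1) (hHt : Ht = Bt + lam • 1)
    (𝓑 : Submodule ℝ (EuclideanSpace ℝ (Fin D)))
    (hagree : ∀ v ∈ 𝓑, H *ᵥ v = Ht *ᵥ v)
    (𝓐 : Submodule ℝ (EuclideanSpace ℝ (Fin D)))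
    (h𝓐 : 𝓐 = 𝓑.map (Matrix.toEuclideanLin H)) :
    (∀ w ∈ 𝓐, H⁻¹ *ᵥ w = Ht⁻¹ *ᵥ w) ∧
    (∀ x : EuclideanSpace ℝ (Fin D),
      |x ⬝ᵥ (Ht⁻¹ *ᵥ x) - x ⬝ᵥ (H⁻¹ *ᵥ x)| ≤
        ‖(𝓐ᗮ.orthogonalProjectionOnto x : EuclideanSpace ℝ (Fin D))‖ ^ 2 / lam) := by
  have hHpd : H.PosDef := hH ▸ hB.posDef_add_smul_one hlam
  have hHtpd : Ht.PosDef := hHt ▸ hBt.posDef_add_smul_one hlam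
  have hinv : ∀ w ∈ 𝓐, H⁻¹ *ᵥ w = Ht⁻¹ *ᵥ w := by
    rintro _ hw
    rw [h𝓐] at hw
    obtain ⟨v, hv, rfl⟩ := hw
    exact inv_mulVec_mulVec_eq_of_mulVec_eq hHpd.isUnit hHtpd.isUnit (hagree v hv)
  refine ⟨hinv, fun x => ?_⟩
  set b := (𝓐ᗮ.orthogonalProjectionOnto x : EuclideanSpace ℝ (Fin D))
  have ha : x - b ∈ 𝓐 := by
    have := Submodule.sub_starProjection_mem_orthogonal (K := 𝓐ᗮ) x
    rwa [Submodule.orthogonal_orthogonal] at this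
  have hker : (Ht⁻¹ - H⁻¹) *ᵥ (x - b).ofLp = 0 := by rw [sub_mulVec, hinv _ ha, sub_self]
  have hsymm : (Ht⁻¹ - H⁻¹).IsSymm :=
    (isHermitian_iff_isSymm.mp hHtpd.isHermitian).inv.sub
      (isHermitian_iff_isSymm.mp hHpd.isHermitian).inv
  have hdecomp : x.ofLp = (x - b).ofLp + b.ofLp := by simp
  rw [← dotProduct_sub, ← sub_mulVec, hdecomp,
    hsymm.add_dotProduct_mulVec_add_of_mulVec_eq_zero hker, sub_mulVec, dotProduct_sub,
    EuclideanSpace.real_norm_sq_eq_dotProduct, hHt, hH]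
  obtain ⟨hHt0, hHt1⟩ := hBt.dotProduct_inv_add_smul_one_mulVec_mem_Icc hlam b.ofLp
  obtain ⟨hH0, hH1⟩ := hB.dotProduct_inv_add_smul_one_mulVec_mem_Icc hlam b.ofLp
  exact abs_sub_le_of_nonneg_of_le hHt0 hHt1 hH0 hH1
end

section
/- Let λ > 0, let x_1, …, x_N ∈ ℝ^D, let c_1, …, c_N ≥ 0, and set H = Σ_{m=1}^N c_m x_m x_mᵀ + λ I_D (positive definite). Then for every n with x_n ≠ 0, the quadratic form Q_n = x_nᵀ H⁻¹ x_n satisfies 0 < Q_n ≤ ‖x_n‖₂² / (λ + c_n ‖x_n‖₂²). -/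
open Matrix BigOperators RealInnerProductSpace

/-!
With `y = H⁻¹ xₙ` we have `Q = yᵀ H y = ∑ cₘ (xₘ ⬝ y)² + λ ‖y‖² ≥ cₙ Q² + λ ‖y‖²`, while
Cauchy–Schwarz gives `Q² ≤ ‖xₙ‖² ‖y‖²`. Together, `Q ≥ Q² (cₙ + λ / ‖xₙ‖²)`, and dividing by
`Q > 0` (positive definiteness of `H⁻¹`) gives the bound.
-/

namespace Matrix

variable {ι n R : Type*} [Fintype ι] [Fintype n]

theorem dotProduct_vecMulVec_self_mulVec [CommSemiring R] (v y : n → R) :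
    y ⬝ᵥ (vecMulVec v v *ᵥ y) = (v ⬝ᵥ y) ^ 2 := by
  simp [vecMulVec_mulVec, dotProduct_comm y v, sq]

theorem dotProduct_sq_le_dotProduct_self_mul [CommRing R] [LinearOrder R]
    [IsStrictOrderedRing R] (v w : n → R) : (v ⬝ᵥ w) ^ 2 ≤ (v ⬝ᵥ v) * (w ⬝ᵥ w) := by
  simpa only [dotProduct, sq] using Finset.sum_mul_sq_le_sq_mul_sq Finset.univ v w

theorem dotProduct_mulVec_sum_smul_vecMulVec_add_smul_one [CommRing R] [DecidableEq n]
    (c : ι → R) (x : ι → n → R) (lam : R) (y : n → R) :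
    y ⬝ᵥ ((∑ m, c m • vecMulVec (x m) (x m) + lam • 1) *ᵥ y) =
      ∑ m, c m * (x m ⬝ᵥ y) ^ 2 + lam * (y ⬝ᵥ y) := by
  simp [add_mulVec, sum_mulVec, dotProduct_sum, smul_mulVec, dotProduct_vecMulVec_self_mulVec]

theorem posDef_sum_smul_vecMulVec_add_smul_one [DecidableEq n] {c : ι → ℝ}
    (hc : ∀ m, 0 ≤ c m) (x : ι → n → ℝ) {lam : ℝ} (hlam : 0 < lam) :
    (∑ m, c m • vecMulVec (x m) (x m) + lam • 1).PosDef :=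
  PosDef.posSemidef_add
    (posSemidef_sum _ fun m _ => by simpa using (posSemidef_vecMulVec_self_star (x m)).smul (hc m))
    (PosDef.one.smul hlam)

end Matrix

theorem le_div_of_mul_sq_add_le {q s t c lam : ℝ} (hq : 0 < q) (hs : 0 < s) (hlam : 0 < lam)
    (hc : 0 ≤ c) (hquad : c * q ^ 2 + lam * t ≤ q) (hCS : q ^ 2 ≤ s * t) :
    q ≤ s / (lam + c * s) := by
  rw [le_div_iff₀ (by positivity)]
  nlinarith

theorem stmt_14
    (N D : ℕ) (lam : ℝ) (hlam : 0 < lam)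
    (x : Fin N → Fin D → ℝ) (c : Fin N → ℝ) (hc : ∀ n, 0 ≤ c n)
    (H : Matrix (Fin D) (Fin D) ℝ)
    (hH : H = ∑ m, c m • Matrix.vecMulVec (x m) (x m) + lam • 1) :
    ∀ n : Fin N, x n ≠ 0 →
      0 < x n ⬝ᵥ (H⁻¹ *ᵥ x n) ∧
      x n ⬝ᵥ (H⁻¹ *ᵥ x n) ≤ (x n ⬝ᵥ x n) / (lam + c n * (x n ⬝ᵥ x n)) := by
  intro n hxn
  have hPD : H.PosDef := by rw [hH]; exact posDef_sum_smul_vecMulVec_add_smul_one hc x hlam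
  have hQ : 0 < x n ⬝ᵥ (H⁻¹ *ᵥ x n) := by simpa using hPD.inv.dotProduct_mulVec_pos hxn
  have hs : 0 < x n ⬝ᵥ x n :=
    lt_of_le_of_ne (Finset.sum_nonneg fun i _ => mul_self_nonneg _) (Ne.symm (by simpa using hxn))
  refine ⟨hQ, le_div_of_mul_sq_add_le hQ hs hlam (hc n) ?_
    (dotProduct_sq_le_dotProduct_self_mul _ _)⟩
  set y := H⁻¹ *ᵥ x n
  have hHy : H *ᵥ y = x n := by
    rw [mulVec_mulVec, mul_nonsing_inv _ hPD.det_pos.ne'.isUnit, one_mulVec]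
  have hexpand : x n ⬝ᵥ y = ∑ m, c m * (x m ⬝ᵥ y) ^ 2 + lam * (y ⬝ᵥ y) := by
    rw [← hHy, dotProduct_comm, hH, dotProduct_mulVec_sum_smul_vecMulVec_add_smul_one]
  have hterm : c n * (x n ⬝ᵥ y) ^ 2 ≤ ∑ m, c m * (x m ⬝ᵥ y) ^ 2 :=
    Finset.single_le_sum (f := fun m => c m * (x m ⬝ᵥ y) ^ 2)
      (fun m _ => mul_nonneg (hc m) (sq_nonneg _)) (Finset.mem_univ n)
  linarith
end
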